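/- arXiv:math/0104271 — 3 statements merged into one kernel-verified Lean document; each statement's English description precedes it below -/
import Mathlib

section
/- Let d > 0, 0 < s ≤ 1, and let g : [0,s] → (0,∞) be a continuous function such that for every Lebesgue-measurable subset ω ⊆ [0,s] with |ω| > 0, sup_{[0,s]} g ≤ (4s/|ω|)^d · sup_ω g. Let m, n, p, q > 0 be reals with m·n = p·q and p·d < 1. Then (∫_0^s g(x)^m e^{−x} dx)^n · (∫_0^s g(x)^{−p} e^{−x} dx)^q ≤ 4^{p q d} · (2(1 − e^{−s}))^{n+q} · (1/(1 − p d))^q. -/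
/-!
Let `M = max g` on `[0, s]`; the first integral is at most `M ^ m (1 - e^{-s})`. Applied to the
sublevel sets `{g ≤ c}`, the Remez condition gives `|{g ≤ c}| ≤ 4s (c / M) ^ (1 / d)`, so the
distribution function of `g ^ (-p)` decays like `t ^ (-1 / (p d))` beyond `4 ^ (p d) M ^ (-p)`.
Since `p d < 1` this tail is integrable, and the layer-cake formula bounds the second integral by
`4 ^ (p d) s M ^ (-p) / (1 - p d)`. The powers of `M` cancel because `m n = p q`, and
`s ≤ 2 (1 - e^{-s})` for `s ≤ 1`.
-/

open MeasureTheory Set Real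

theorem Real.biSup_eq_of_isMaxOn {α : Type*} {f : α → ℝ} {s : Set α} {x₀ : α} (hx₀ : x₀ ∈ s)
    (hmax : IsMaxOn f s x₀) (h₀ : 0 ≤ f x₀) : ⨆ x ∈ s, f x = f x₀ := by
  have : Nonempty α := ⟨x₀⟩
  refine ciSup_eq_of_forall_le_of_forall_lt_exists_gt
    (fun x => Real.iSup_le (fun hx => hmax hx) h₀) fun w hw => ⟨x₀, ?_⟩
  rwa [ciSup_pos hx₀]

theorem le_two_mul_one_sub_exp_neg {s : ℝ} (hs : 0 ≤ s) (hs1 : s ≤ 1) :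
    s ≤ 2 * (1 - exp (-s)) := by
  have h : exp (-s) * (1 + s) ≤ 1 := by
    rw [exp_neg, inv_mul_le_iff₀ (exp_pos s), mul_one, add_comm]
    exact add_one_le_exp s
  nlinarith

theorem le_mul_div_rpow_inv_of_le_div_rpow_mul {v K M c d : ℝ} (hd : 0 < d) (hv : 0 < v)
    (hK : 0 < K) (hM : 0 < M) (hc : 0 < c) (h : M ≤ (K / v) ^ d * c) :
    v ≤ K * (c / M) ^ d⁻¹ := by
  rw [← div_le_iff₀' hK, le_rpow_inv_iff_of_pos (by positivity) (by positivity) hd,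
    le_div_iff₀ hM, ← inv_div K v, inv_rpow (by positivity), inv_mul_le_iff₀ (by positivity)]
  linarith

section

variable {α : Type*} [MeasurableSpace α]

theorem measure_inter_setOf_le_le_of_remez {μ : Measure α} {g : α → ℝ} {I : Set α}
    {K M d c : ℝ} (hd : 0 < d) (hK : 0 < K) (hM : 0 < M) (hc : 0 < c) (hI : μ I ≠ ⊤)
    (hmeas : MeasurableSet (I ∩ {x | g x ≤ c}))
    (hrem : ∀ ω ⊆ I, MeasurableSet ω → 0 < μ ω → M ≤ (K / (μ ω).toReal) ^ d * ⨆ x ∈ ω, g x) :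
    μ (I ∩ {x | g x ≤ c}) ≤ ENNReal.ofReal (K * (c / M) ^ d⁻¹) := by
  set ω := I ∩ {x | g x ≤ c}
  rcases eq_zero_or_pos (μ ω) with hω | hω
  · simp [hω]
  have hωfin : μ ω ≠ ⊤ := ne_top_of_le_ne_top hI (measure_mono inter_subset_left)
  have hsup : ⨆ x ∈ ω, g x ≤ c := Real.iSup_le (fun x => Real.iSup_le (fun hx => hx.2) hc.le) hc.le
  have h := (hrem ω inter_subset_left hmeas hω).trans
    (mul_le_mul_of_nonneg_left hsup (rpow_nonneg (by positivity) d))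
  rw [← ENNReal.ofReal_toReal hωfin]
  exact ENNReal.ofReal_le_ofReal (le_mul_div_rpow_inv_of_le_div_rpow_mul hd
    (ENNReal.toReal_pos hω.ne' hωfin) hK hM hc h)

theorem measure_restrict_lt_rpow_neg_le_of_remez {μ : Measure α} {g : α → ℝ} {I : Set α}
    {K M d p t : ℝ} (hd : 0 < d) (hp : 0 < p) (hK : 0 < K) (hM : 0 < M) (ht : 0 < t)
    (hgpos : ∀ x ∈ I, 0 < g x) (hI : MeasurableSet I) (hIfin : μ I ≠ ⊤)
    (hmeas : ∀ c, MeasurableSet (I ∩ {x | g x ≤ c}))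
    (hrem : ∀ ω ⊆ I, MeasurableSet ω → 0 < μ ω → M ≤ (K / (μ ω).toReal) ^ d * ⨆ x ∈ ω, g x) :
    μ.restrict I {x | t < g x ^ (-p)} ≤ ENNReal.ofReal (K * (M ^ (-p) / t) ^ (p * d)⁻¹) := by
  set c := t ^ (-p⁻¹)
  have hsub : {x | t < g x ^ (-p)} ∩ I ⊆ I ∩ {x | g x ≤ c} := by
    rintro x ⟨hx, hxI⟩
    refine ⟨hxI, ?_⟩
    have := rpow_le_rpow_of_nonpos ht hx.le (neg_nonpos.2 (inv_nonneg.2 hp.le))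
    rwa [← rpow_mul (hgpos x hxI).le, neg_mul_neg, mul_inv_cancel₀ hp.ne', rpow_one] at this
  have hc : (c / M) ^ d⁻¹ = (M ^ (-p) / t) ^ (p * d)⁻¹ := by
    rw [div_rpow (by positivity) hM.le, div_rpow (by positivity) ht.le, ← rpow_mul ht.le,
      ← rpow_mul hM.le, show -p⁻¹ * d⁻¹ = -(p * d)⁻¹ by ring,
      show -p * (p * d)⁻¹ = -d⁻¹ by field_simp, rpow_neg ht.le, rpow_neg hM.le]
    ring
  calc μ.restrict I {x | t < g x ^ (-p)} = μ ({x | t < g x ^ (-p)} ∩ I) :=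
        Measure.restrict_apply' hI
    _ ≤ μ (I ∩ {x | g x ≤ c}) := measure_mono hsub
    _ ≤ _ := measure_inter_setOf_le_le_of_remez hd hK hM (by positivity) hIfin (hmeas c) hrem
    _ = _ := by rw [hc]

theorem lintegral_ofReal_le_of_meas_lt_le {μ : Measure α} {f : α → ℝ} (hf : 0 ≤ᵐ[μ] f)
    (hfm : AEMeasurable f μ) {A T β : ℝ} (hA : 0 ≤ A) (hT : 0 < T) (hβ : 1 < β)
    (hμ : μ univ ≤ ENNReal.ofReal A)
    (htail : ∀ t, T < t → μ {a | t < f a} ≤ ENNReal.ofReal (A * (T / t) ^ β)) :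
    ∫⁻ a, ENNReal.ofReal (f a) ∂μ ≤ ENNReal.ofReal (A * T * β / (β - 1)) := by
  have hhead : ∫⁻ t in Ioc 0 T, μ {a | t < f a} ≤ ENNReal.ofReal (A * T) := calc
    _ ≤ ∫⁻ _ in Ioc 0 T, ENNReal.ofReal A :=
        lintegral_mono fun t => (measure_mono (subset_univ _)).trans hμ
    _ = _ := by rw [setLIntegral_const, Real.volume_Ioc, sub_zero, ← ENNReal.ofReal_mul hA]
  have hint : IntegrableOn (fun t => A * T ^ β * t ^ (-β)) (Ioi T) :=
    (integrableOn_Ioi_rpow_of_lt (by linarith) hT).const_mul _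
  have hnonneg : 0 ≤ᵐ[volume.restrict (Ioi T)] fun t => A * T ^ β * t ^ (-β) := by
    filter_upwards [ae_restrict_mem measurableSet_Ioi] with t ht
    exact mul_nonneg (by positivity) (rpow_nonneg (hT.trans ht).le _)
  have htail' : ∫⁻ t in Ioi T, μ {a | t < f a} ≤ ENNReal.ofReal (A * T / (β - 1)) := calc
    _ ≤ ∫⁻ t in Ioi T, ENNReal.ofReal (A * T ^ β * t ^ (-β)) := by
        refine setLIntegral_mono' measurableSet_Ioi fun t ht => (htail t ht).trans_eq ?_
        rw [div_rpow hT.le (hT.trans ht).le, rpow_neg (hT.trans ht).le, div_eq_mul_inv, mul_assoc]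
    _ = ENNReal.ofReal (∫ t in Ioi T, A * T ^ β * t ^ (-β)) :=
        (ofReal_integral_eq_lintegral_ofReal hint hnonneg).symm
    _ = _ := by
        rw [integral_const_mul, integral_Ioi_rpow_of_lt (by linarith) hT, rpow_add hT,
          rpow_neg hT.le, rpow_one, show -β + 1 = -(β - 1) by ring, neg_div_neg_eq, mul_div_assoc',
          ← mul_assoc, mul_assoc A, mul_inv_cancel₀ (rpow_pos_of_pos hT β).ne', mul_one]
  rw [lintegral_eq_lintegral_meas_lt μ hf hfm, ← Ioc_union_Ioi_eq_Ioi hT.le,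
    lintegral_union measurableSet_Ioi (Ioc_disjoint_Ioi le_rfl)]
  calc _ ≤ ENNReal.ofReal (A * T) + ENNReal.ofReal (A * T / (β - 1)) := add_le_add hhead htail'
    _ = _ := by
        rw [← ENNReal.ofReal_add (by positivity) (div_nonneg (by positivity) (by linarith))]
        have : β - 1 ≠ 0 := by linarith
        congr 1
        field_simp
        ring

theorem setLIntegral_rpow_neg_le_of_remez {μ : Measure α} {g : α → ℝ} {I : Set α}
    {A K M d p : ℝ} (hd : 0 < d) (hp : 0 < p) (hpd : p * d < 1) (hA : 0 < A) (hK : 0 < K)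
    (hM : 0 < M) (hgpos : ∀ x ∈ I, 0 < g x) (hI : MeasurableSet I) (hIA : μ I ≤ ENNReal.ofReal A)
    (hmeas : ∀ c, MeasurableSet (I ∩ {x | g x ≤ c})) (hgm : AEMeasurable g (μ.restrict I))
    (hrem : ∀ ω ⊆ I, MeasurableSet ω → 0 < μ ω → M ≤ (K / (μ ω).toReal) ^ d * ⨆ x ∈ ω, g x) :
    ∫⁻ x in I, ENNReal.ofReal (g x ^ (-p)) ∂μ ≤
      ENNReal.ofReal ((K / A) ^ (p * d) * A * M ^ (-p) / (1 - p * d)) := by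
  have hpd0 : 0 < p * d := mul_pos hp hd
  set T := (K / A) ^ (p * d) * M ^ (-p)
  have hT : 0 < T := by positivity
  have hβ : 1 < (p * d)⁻¹ := (one_lt_inv₀ hpd0).2 hpd
  have htail : ∀ t, T < t → μ.restrict I {x | t < g x ^ (-p)} ≤
      ENNReal.ofReal (A * (T / t) ^ (p * d)⁻¹) := fun t hTt => by
    have ht : 0 < t := hT.trans hTt
    refine (measure_restrict_lt_rpow_neg_le_of_remez hd hp hK hM ht hgpos hI
      (ne_top_of_le_ne_top ENNReal.ofReal_ne_top hIA) hmeas hrem).trans_eq ?_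
    rw [mul_div_assoc, mul_rpow (by positivity) (by positivity), ← rpow_mul (by positivity),
      mul_inv_cancel₀ hpd0.ne', rpow_one, ← mul_assoc, mul_div_cancel₀ K hA.ne']
  refine (lintegral_ofReal_le_of_meas_lt_le ?_ (hgm.pow_const _) hA.le hT hβ
    (by rwa [Measure.restrict_apply_univ]) htail).trans_eq ?_
  · filter_upwards [ae_restrict_mem hI] with x hx
    exact rpow_nonneg (hgpos x hx).le _
  · have : 1 - p * d ≠ 0 := by linarith
    congr 1
    field_simp
    rfl

end

theorem intervalIntegral_mul_exp_neg_le_of_setLIntegral_le {f : ℝ → ℝ} {s B : ℝ} (hs : 0 ≤ s)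
    (hB : 0 ≤ B) (hf : ∀ x ∈ Icc 0 s, 0 ≤ f x)
    (hfB : ∫⁻ x in Icc 0 s, ENNReal.ofReal (f x) ≤ ENNReal.ofReal B) :
    ∫ x in 0..s, f x * exp (-x) ≤ B := by
  rw [intervalIntegral.integral_of_le hs]
  refine (le_abs_self _).trans <| (Real.norm_eq_abs _).symm.trans_le <|
    (norm_integral_le_lintegral_norm _).trans <| ENNReal.toReal_le_of_le_ofReal hB ?_
  calc ∫⁻ x in Ioc 0 s, ENNReal.ofReal ‖f x * exp (-x)‖
      ≤ ∫⁻ x in Ioc 0 s, ENNReal.ofReal (f x) := by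
        refine setLIntegral_mono' measurableSet_Ioc fun x hx => ENNReal.ofReal_le_ofReal ?_
        rw [norm_mul, norm_of_nonneg (hf x (Ioc_subset_Icc_self hx)), norm_of_nonneg (exp_pos _).le]
        exact mul_le_of_le_one_right (hf x (Ioc_subset_Icc_self hx))
          (exp_le_one_iff.2 (by linarith [hx.1]))
    _ ≤ ∫⁻ x in Icc 0 s, ENNReal.ofReal (f x) := lintegral_mono_set Ioc_subset_Icc_self
    _ ≤ _ := hfB

theorem intervalIntegral_rpow_mul_exp_neg_le {g : ℝ → ℝ} {s M m : ℝ} (hs : 0 ≤ s) (hm : 0 ≤ m)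
    (hg : ContinuousOn g (Icc 0 s)) (hg0 : ∀ x ∈ Icc 0 s, 0 ≤ g x)
    (hgM : ∀ x ∈ Icc 0 s, g x ≤ M) :
    ∫ x in 0..s, g x ^ m * exp (-x) ≤ M ^ m * (1 - exp (-s)) := by
  have hexp : Continuous fun x : ℝ => exp (-x) := by fun_prop
  calc ∫ x in 0..s, g x ^ m * exp (-x) ≤ ∫ x in 0..s, M ^ m * exp (-x) := by
        refine intervalIntegral.integral_mono_on hs ?_ ((hexp.intervalIntegrable _ _).const_mul _)
          fun x hx => by gcongr; exacts [hg0 x hx, hgM x hx]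
        refine ContinuousOn.intervalIntegrable ?_
        rw [uIcc_of_le hs]
        exact (hg.rpow_const fun _ _ => Or.inr hm).mul hexp.continuousOn
    _ = M ^ m * (1 - exp (-s)) := by
        rw [intervalIntegral.integral_const_mul, intervalIntegral.integral_comp_neg exp, neg_zero,
          integral_exp, exp_zero]

theorem intervalIntegral_rpow_neg_mul_exp_neg_le_of_remez {g : ℝ → ℝ} {s M d p : ℝ}
    (hd : 0 < d) (hs : 0 < s) (hp : 0 < p) (hpd : p * d < 1) (hM : 0 < M)
    (hg : ContinuousOn g (Icc 0 s)) (hgpos : ∀ x ∈ Icc 0 s, 0 < g x)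
    (hrem : ∀ ω ⊆ Icc 0 s, MeasurableSet ω → 0 < volume ω →
      M ≤ (4 * s / (volume ω).toReal) ^ d * ⨆ x ∈ ω, g x) :
    ∫ x in 0..s, g x ^ (-p) * exp (-x) ≤ 4 ^ (p * d) * s * (1 / (1 - p * d)) * M ^ (-p) := by
  have hlint := setLIntegral_rpow_neg_le_of_remez hd hp hpd hs (by positivity) hM hgpos
    measurableSet_Icc (by rw [Real.volume_Icc, sub_zero])
    (fun _ => (hg.preimage_isClosed_of_isClosed isClosed_Icc isClosed_Iic).measurableSet)
    (hg.aemeasurable measurableSet_Icc) hrem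
  rw [mul_div_cancel_right₀ _ hs.ne'] at hlint
  refine intervalIntegral_mul_exp_neg_le_of_setLIntegral_le hs.le (by positivity)
    (fun x hx => (rpow_pos_of_pos (hgpos x hx) _).le) (hlint.trans_eq ?_)
  congr 1
  ring

theorem rpow_mul_rpow_le_of_le_rpow_mul {x y M a b m n p q : ℝ} (hx : 0 ≤ x) (hy : 0 ≤ y)
    (hM : 0 < M) (hn : 0 ≤ n) (hq : 0 ≤ q) (hmn : m * n = p * q) (hxM : x ≤ M ^ m * a)
    (hyM : y ≤ b * M ^ (-p)) : x ^ n * y ^ q ≤ a ^ n * b ^ q := by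
  have ha : 0 ≤ a := nonneg_of_mul_nonneg_right (hx.trans hxM) (by positivity)
  have hb : 0 ≤ b := nonneg_of_mul_nonneg_left (hy.trans hyM) (by positivity)
  calc x ^ n * y ^ q ≤ (M ^ m * a) ^ n * (b * M ^ (-p)) ^ q := by gcongr
    _ = a ^ n * b ^ q := by
      rw [mul_rpow (by positivity) ha, mul_rpow hb (by positivity), ← rpow_mul hM.le,
        ← rpow_mul hM.le, hmn, neg_mul, rpow_neg hM.le]
      have : M ^ (p * q) ≠ 0 := by positivity
      field_simp

/-- The case `0 < s ≤ 1` in the proof of Theorem 1.5: if `g > 0` is continuous on `[0,s]`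
and satisfies the Remez-type inequality with exponent `d` on `[0,s]`, then for
`m·n = p·q`, `p·d < 1`,
`(∫_0^s g^m e^{−x})^n (∫_0^s g^{−p} e^{−x})^q ≤ 4^{pqd} (2(1−e^{−s}))^{n+q} (1/(1−pd))^q`. -/
theorem needle_inequality_small (d s : ℝ) (hd : 0 < d) (hs : 0 < s) (hs1 : s ≤ 1)
    (g : ℝ → ℝ) (hg : ContinuousOn g (Set.Icc 0 s))
    (hgpos : ∀ x ∈ Set.Icc (0 : ℝ) s, 0 < g x)
    -- the Remez-type condition on `[0,s]`
    (hrem : ∀ ω : Set ℝ, ω ⊆ Set.Icc (0 : ℝ) s → MeasurableSet ω → 0 < volume ω →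
      (⨆ x ∈ Set.Icc (0 : ℝ) s, g x) ≤
        (4 * s / (volume ω).toReal) ^ d * ⨆ x ∈ ω, g x)
    (m n p q : ℝ) (hm : 0 < m) (hn : 0 < n) (hp : 0 < p) (hq : 0 < q)
    (hmn : m * n = p * q) (hpd : p * d < 1) :
    (∫ x in (0 : ℝ)..s, g x ^ m * Real.exp (-x)) ^ n *
        (∫ x in (0 : ℝ)..s, g x ^ (-p) * Real.exp (-x)) ^ q ≤
      (4 : ℝ) ^ (p * q * d) * (2 * (1 - Real.exp (-s))) ^ (n + q) *
        (1 / (1 - p * d)) ^ q := by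
  obtain ⟨x₀, hx₀, hmax⟩ := isCompact_Icc.exists_isMaxOn (nonempty_Icc.2 hs.le) hg
  set M := ⨆ x ∈ Icc 0 s, g x
  have hMx₀ : M = g x₀ := Real.biSup_eq_of_isMaxOn hx₀ hmax (hgpos x₀ hx₀).le
  have hM : 0 < M := hMx₀ ▸ hgpos x₀ hx₀
  have hI₁ := intervalIntegral_rpow_mul_exp_neg_le hs.le hm.le hg (fun x hx => (hgpos x hx).le)
    (fun x hx => hMx₀ ▸ hmax hx)
  have hI₂ := intervalIntegral_rpow_neg_mul_exp_neg_le_of_remez hd hs hp hpd hM hg hgpos hrem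
  have hs2 := le_two_mul_one_sub_exp_neg hs.le hs1
  have he : 0 < 1 - exp (-s) := by linarith
  calc _ ≤ (1 - exp (-s)) ^ n * (4 ^ (p * d) * s * (1 / (1 - p * d))) ^ q :=
        rpow_mul_rpow_le_of_le_rpow_mul
          (intervalIntegral.integral_nonneg hs.le fun x hx => by have := hgpos x hx; positivity)
          (intervalIntegral.integral_nonneg hs.le fun x hx => by have := hgpos x hx; positivity)
          hM hn.le hq.le hmn hI₁ hI₂
    _ = 4 ^ (p * q * d) * ((1 - exp (-s)) ^ n * s ^ q) * (1 / (1 - p * d)) ^ q := by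
        rw [mul_rpow (by positivity) (by positivity), mul_rpow (by positivity) hs.le,
          ← rpow_mul (by norm_num)]
        ring_nf
    _ ≤ 4 ^ (p * q * d) * ((2 * (1 - exp (-s))) ^ n * (2 * (1 - exp (-s))) ^ q) *
          (1 / (1 - p * d)) ^ q := by
        gcongr
        linarith
    _ = _ := by rw [rpow_add (by positivity)]
end

section
/- Let d > 0, let s ≥ 1 be an integer, let m > 0, and let g : [0,s] → (0,∞) be a continuous function such that for every closed subinterval J ⊆ [0,s] and every Lebesgue-measurable subset ω ⊆ J with |ω| > 0, sup_J g ≤ (4|J|/|ω|)^d · sup_ω g. Then ∫_0^s g(x)^m e^{−x} dx ≤ e · 4^{m d} · Γ(m d + 1) · (sup_{[0,1]} g)^m, where Γ(x) := ∫_0^∞ t^{x−1} e^{−t} dt. -/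
/-!
Applying the Remez-type inequality on `J = [0, max x 1]` with `ω = [0,1]` gives the pointwise
bound `g x ≤ (4 (x + 1))^d · sup_{[0,1]} g`. Raised to the power `m`, it reduces the integral to
`4^{md} (sup_{[0,1]} g)^m ∫_0^s (x+1)^{md} e^{-x} dx`, and the substitution `y = x + 1` bounds
the last integral by `e · Γ(md + 1)`.
-/

open MeasureTheory Set

noncomputable section

def RemezCondition (g : ℝ → ℝ) (d s : ℝ) : Prop :=
  ∀ u v : ℝ, 0 ≤ u → u ≤ v → v ≤ s →
    ∀ ω : Set ℝ, ω ⊆ Icc u v → MeasurableSet ω → 0 < volume ω →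
      (⨆ x ∈ Icc u v, g x) ≤ (4 * (v - u) / (volume ω).toReal) ^ d * ⨆ x ∈ ω, g x

/-- Over `ℝ`, `⨆ x ∈ s, f x` also ranges over the empty suprema
`⨆ _ : x ∈ s, f x = sSup ∅ = 0` for `x ∉ s`, hence the sign condition. -/
theorem le_biSup_of_bddAbove_of_nonneg {α : Type*} {f : α → ℝ} {s : Set α}
    (hf : BddAbove (f '' s)) {c : α} (hc : c ∈ s) (hc0 : 0 ≤ f c) :
    f c ≤ ⨆ x ∈ s, f x := by
  have hrange : BddAbove (range fun i : s => f i) := by rwa [← image_eq_range]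
  have hle : f c ≤ ⨆ i : s, f i := le_ciSup_set hf hc
  rwa [ciSup_subtype_fun hrange (by rw [Real.sSup_empty]; exact hc0.trans hle)] at hle

namespace RemezCondition

variable {g : ℝ → ℝ} {d s : ℝ}

theorem iSup_Icc_zero_le (hrem : RemezCondition g d s) {v : ℝ} (hv : 1 ≤ v) (hvs : v ≤ s) :
    (⨆ x ∈ Icc 0 v, g x) ≤ (4 * v) ^ d * ⨆ x ∈ Icc (0 : ℝ) 1, g x := by
  have hvol : volume (Icc (0 : ℝ) 1) = 1 := by simp [Real.volume_Icc]
  simpa [hvol] using hrem 0 v le_rfl (by linarith) hvs (Icc 0 1)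
    (Icc_subset_Icc le_rfl hv) measurableSet_Icc (by simp [hvol])

theorem iSup_Icc_zero_one_nonneg (hs : 1 ≤ s) (hg : ∀ x ∈ Icc 0 s, 0 ≤ g x) :
    0 ≤ ⨆ y ∈ Icc (0 : ℝ) 1, g y :=
  Real.iSup_nonneg fun y => Real.iSup_nonneg fun hy => hg y ⟨hy.1, hy.2.trans hs⟩

theorem le_rpow_mul_iSup_Icc_zero_one (hrem : RemezCondition g d s) (hd : 0 ≤ d) (hs : 1 ≤ s)
    (hbdd : BddAbove (g '' Icc 0 s)) (hg : ∀ x ∈ Icc 0 s, 0 ≤ g x) {x : ℝ} (hx : x ∈ Icc 0 s) :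
    g x ≤ (4 * (x + 1)) ^ d * ⨆ y ∈ Icc (0 : ℝ) 1, g y := by
  have hM := iSup_Icc_zero_one_nonneg hs hg
  have hxv : max x 1 ≤ s := max_le hx.2 hs
  calc g x ≤ ⨆ y ∈ Icc 0 (max x 1), g y :=
        le_biSup_of_bddAbove_of_nonneg (hbdd.mono (image_mono (Icc_subset_Icc le_rfl hxv)))
          ⟨hx.1, le_max_left x 1⟩ (hg x hx)
    _ ≤ (4 * max x 1) ^ d * ⨆ y ∈ Icc (0 : ℝ) 1, g y :=
        hrem.iSup_Icc_zero_le (le_max_right x 1) hxv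
    _ ≤ (4 * (x + 1)) ^ d * ⨆ y ∈ Icc (0 : ℝ) 1, g y := by
        have : max x 1 ≤ x + 1 := max_le (by linarith) (by linarith [hx.1])
        gcongr

theorem rpow_le_of_mem_Icc (hrem : RemezCondition g d s) (hd : 0 ≤ d) (hs : 1 ≤ s)
    (hbdd : BddAbove (g '' Icc 0 s)) (hg : ∀ x ∈ Icc 0 s, 0 ≤ g x) {m : ℝ} (hm : 0 ≤ m) {x : ℝ}
    (hx : x ∈ Icc 0 s) :
    g x ^ m ≤ 4 ^ (m * d) * (⨆ y ∈ Icc (0 : ℝ) 1, g y) ^ m * (x + 1) ^ (m * d) := by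
  have hM := iSup_Icc_zero_one_nonneg hs hg
  have hx1 : 0 ≤ x + 1 := by linarith [hx.1]
  calc g x ^ m ≤ ((4 * (x + 1)) ^ d * ⨆ y ∈ Icc (0 : ℝ) 1, g y) ^ m := by
        gcongr
        exacts [hg x hx, hrem.le_rpow_mul_iSup_Icc_zero_one hd hs hbdd hg hx]
    _ = 4 ^ (m * d) * (⨆ y ∈ Icc (0 : ℝ) 1, g y) ^ m * (x + 1) ^ (m * d) := by
        rw [Real.mul_rpow (by positivity) hM, ← Real.rpow_mul (by positivity),
          Real.mul_rpow (by norm_num) hx1, mul_comm d m]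
        ring

end RemezCondition

theorem integral_add_one_rpow_mul_exp_neg_le {p b : ℝ} (hp : -1 < p) (hb : 0 ≤ b) :
    ∫ x in (0 : ℝ)..b, (x + 1) ^ p * Real.exp (-x) ≤ Real.exp 1 * Real.Gamma (p + 1) := by
  have hshift : ∫ x in (0 : ℝ)..b, (x + 1) ^ p * Real.exp (-x) =
      Real.exp 1 * ∫ y in Ioc 1 (b + 1), Real.exp (-y) * y ^ p := by
    have h : ∀ x : ℝ, (x + 1) ^ p * Real.exp (-x) =
        Real.exp 1 * (Real.exp (-(x + 1)) * (x + 1) ^ p) := fun x => by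
      rw [← mul_assoc, ← Real.exp_add]; ring_nf
    simp_rw [h, intervalIntegral.integral_const_mul,
      intervalIntegral.integral_comp_add_right (fun y => Real.exp (-y) * y ^ p) 1, zero_add,
      intervalIntegral.integral_of_le (by linarith : (1 : ℝ) ≤ b + 1)]
  rw [hshift, Real.Gamma_eq_integral (by linarith : 0 < p + 1), add_sub_cancel_right]
  gcongr
  · filter_upwards [ae_restrict_mem measurableSet_Ioi] with y hy
    exact mul_nonneg (Real.exp_nonneg _) (Real.rpow_nonneg hy.le _)
  · simpa only [IntegrableOn, add_sub_cancel_right] using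
      Real.GammaIntegral_convergent (show 0 < p + 1 by linarith)
  · exact fun y hy => one_pos.trans hy.1

/-- The estimate of the first factor for integer `s ≥ 1`: if `g > 0` is continuous on
`[0,s]` and satisfies a Remez-type inequality with exponent `d` on every closed
subinterval of `[0,s]`, then for `m > 0`,
`∫_0^s g^m e^{−x} dx ≤ e · 4^{md} · Γ(md+1) · (sup_{[0,1]} g)^m`. -/
theorem positive_power_estimate (d : ℝ) (hd : 0 < d) (s : ℕ) (hs : 1 ≤ s)
    (m : ℝ) (hm : 0 < m)
    (g : ℝ → ℝ) (hg : ContinuousOn g (Set.Icc 0 (s : ℝ)))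
    (hgpos : ∀ x ∈ Set.Icc (0 : ℝ) (s : ℝ), 0 < g x)
    -- the Remez-type condition on every closed subinterval `J = [u,v] ⊆ [0,s]`
    (hrem : ∀ u v : ℝ, 0 ≤ u → u ≤ v → v ≤ (s : ℝ) →
      ∀ ω : Set ℝ, ω ⊆ Set.Icc u v → MeasurableSet ω → 0 < volume ω →
        (⨆ x ∈ Set.Icc u v, g x) ≤
          (4 * (v - u) / (volume ω).toReal) ^ d * ⨆ x ∈ ω, g x) :
    (∫ x in (0 : ℝ)..(s : ℝ), g x ^ m * Real.exp (-x)) ≤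
      Real.exp 1 * (4 : ℝ) ^ (m * d) * Real.Gamma (m * d + 1) *
        (⨆ x ∈ Set.Icc (0 : ℝ) 1, g x) ^ m := by
  have hs1 : (1 : ℝ) ≤ s := by exact_mod_cast hs
  have hgnn : ∀ x ∈ Icc (0 : ℝ) s, 0 ≤ g x := fun x hx => (hgpos x hx).le
  set M := ⨆ x ∈ Icc (0 : ℝ) 1, g x
  have hM : 0 ≤ M := RemezCondition.iSup_Icc_zero_one_nonneg hs1 hgnn
  have hbound : ∀ x ∈ Icc (0 : ℝ) s, g x ^ m * Real.exp (-x) ≤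
      4 ^ (m * d) * M ^ m * ((x + 1) ^ (m * d) * Real.exp (-x)) := fun x hx => by
    have hgx := RemezCondition.rpow_le_of_mem_Icc hrem hd.le hs1
      (isCompact_Icc.image_of_continuousOn hg).bddAbove hgnn hm.le hx
    calc g x ^ m * Real.exp (-x) ≤ 4 ^ (m * d) * M ^ m * (x + 1) ^ (m * d) * Real.exp (-x) := by
          gcongr
      _ = _ := by ring
  have hcont : ContinuousOn (fun x => g x ^ m * Real.exp (-x)) (Icc 0 (s : ℝ)) :=
    (hg.rpow_const fun _ _ => Or.inr hm.le).mul (by fun_prop)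
  have hcont_bound : ContinuousOn (fun x : ℝ => 4 ^ (m * d) * M ^ m * ((x + 1) ^ (m * d) *
      Real.exp (-x))) (Icc 0 (s : ℝ)) := by
    fun_prop (disch := positivity)
  calc ∫ x in (0 : ℝ)..s, g x ^ m * Real.exp (-x)
      ≤ ∫ x in (0 : ℝ)..s, 4 ^ (m * d) * M ^ m * ((x + 1) ^ (m * d) * Real.exp (-x)) :=
        intervalIntegral.integral_mono_on (by positivity)
          (hcont.intervalIntegrable_of_Icc (by positivity))
          (hcont_bound.intervalIntegrable_of_Icc (by positivity)) hbound
    _ ≤ 4 ^ (m * d) * M ^ m * (Real.exp 1 * Real.Gamma (m * d + 1)) := by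
        rw [intervalIntegral.integral_const_mul]
        gcongr
        exact integral_add_one_rpow_mul_exp_neg_le (by nlinarith) (by positivity)
    _ = Real.exp 1 * 4 ^ (m * d) * Real.Gamma (m * d + 1) * M ^ m := by ring
end
end

section
/- Let d > 0, let s ≥ 1 be an integer, let p > 0 with p·d < 1, and let g : [0,s] → (0,∞) be a continuous function such that for every closed subinterval J ⊆ [0,s] and every Lebesgue-measurable subset ω ⊆ J with |ω| > 0, sup_J g ≤ (4|J|/|ω|)^d · sup_ω g. Then ∫_0^s g(x)^{−p} e^{−x} dx ≤ (e · 4^{p d}/(1 − p d)) · (sup_{[0,1]} g)^{−p}. -/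
/-!
Let `M = sup_{[0,1]} g`. On `[k, k+1]`, the Remez inequality for `J = [0, k+1]` and the sublevel
set `ω = J ∩ {g ≤ λ}` gives `|ω| ≤ 4(k+1) (λ/M)^{1/d}`, i.e. the weak-type tail bound
`|{g^{-p} > t}| ≤ C t^{-1/(pd)}`. As `pd < 1`, the layer-cake formula cut at `t = C^{pd}` yields
`∫_k^{k+1} g^{-p} ≤ (4(k+1))^{pd} M^{-p} / (1 - pd) ≤ 4^{pd} (k+1) M^{-p} / (1 - pd)`.
Bounding `e^{-x} ≤ e^{-k}` there and summing, it remains to use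
`∑ (k+1) e^{-k} ≤ (1 - e^{-1})^{-2} ≤ e`.
-/

open MeasureTheory Set

theorem lintegral_le_of_meas_lt_le_mul_rpow {α : Type*} [MeasurableSpace α] {μ : Measure α}
    {f : α → ℝ} {b C : ℝ} (hb₀ : 0 < b) (hb₁ : b < 1) (hC : 0 < C) (hμ : μ univ ≤ 1)
    (hf_nn : 0 ≤ᵐ[μ] f) (hf : AEMeasurable f μ)
    (hdist : ∀ t > 0, μ {x | t < f x} ≤ ENNReal.ofReal (C * t ^ (-b⁻¹))) :
    ∫⁻ x, ENNReal.ofReal (f x) ∂μ ≤ ENNReal.ofReal (C ^ b / (1 - b)) := by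
  set T := C ^ b
  have hT : 0 < T := by positivity
  have h1b : 0 < 1 - b := by linarith
  have hexp : -b⁻¹ < -1 := by rw [neg_lt_neg_iff, one_lt_inv₀ hb₀]; exact hb₁
  have h_small : ∫⁻ t in Ioc 0 T, μ {x | t < f x} ≤ ENNReal.ofReal T := calc
    _ ≤ ∫⁻ _ in Ioc 0 T, 1 := lintegral_mono fun t => (measure_mono (subset_univ _)).trans hμ
    _ = ENNReal.ofReal T := by simp
  have h_large : ∫⁻ t in Ioi T, μ {x | t < f x} ≤ ENNReal.ofReal (T * b / (1 - b)) := calc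
    _ ≤ ∫⁻ t in Ioi T, ENNReal.ofReal (C * t ^ (-b⁻¹)) :=
      setLIntegral_mono' measurableSet_Ioi fun t ht => hdist t (hT.trans ht)
    _ = ENNReal.ofReal (∫ t in Ioi T, C * t ^ (-b⁻¹)) := by
      refine (ofReal_integral_eq_lintegral_ofReal
        ((integrableOn_Ioi_rpow_of_lt hexp hT).const_mul C) ?_).symm
      filter_upwards [ae_restrict_mem measurableSet_Ioi] with t ht
      exact mul_nonneg hC.le (Real.rpow_nonneg (hT.trans ht).le _)
    _ = ENNReal.ofReal (T * b / (1 - b)) := by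
      have hCT : C * T ^ (-b⁻¹ + 1) = T := by
        rw [← Real.rpow_mul hC.le, mul_add, mul_neg, mul_inv_cancel₀ hb₀.ne', mul_one,
          Real.rpow_add hC, Real.rpow_neg_one]
        field_simp
        rfl
      have hdenom : -b⁻¹ + 1 = -(1 - b) / b := by field_simp; ring
      rw [integral_const_mul, integral_Ioi_rpow_of_lt hexp hT, mul_div_assoc', mul_neg, hCT,
        hdenom]
      field_simp
  calc ∫⁻ x, ENNReal.ofReal (f x) ∂μ
      = (∫⁻ t in Ioc 0 T, μ {x | t < f x}) + ∫⁻ t in Ioi T, μ {x | t < f x} := by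
        rw [lintegral_eq_lintegral_meas_lt μ hf_nn hf, ← Ioc_union_Ioi_eq_Ioi hT.le,
          lintegral_union measurableSet_Ioi Ioc_disjoint_Ioi_same]
    _ ≤ ENNReal.ofReal T + ENNReal.ofReal (T * b / (1 - b)) := add_le_add h_small h_large
    _ = ENNReal.ofReal (T / (1 - b)) := by
        rw [← ENNReal.ofReal_add hT.le (by positivity)]
        congr 1
        field_simp
        ring

theorem le_mul_rpow_of_le_div_rpow_mul {a ℓ M s d : ℝ} (hd : 0 < d) (ha : 0 < a) (hℓ : 0 ≤ ℓ)
    (hM : 0 < M) (hs : 0 ≤ s) (h : M ≤ (ℓ / a) ^ d * s) : a ≤ ℓ * M ^ (-d⁻¹) * s ^ d⁻¹ := by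
  have h' : M ^ d⁻¹ ≤ ℓ / a * s ^ d⁻¹ := calc
    M ^ d⁻¹ ≤ ((ℓ / a) ^ d * s) ^ d⁻¹ := Real.rpow_le_rpow hM.le h (inv_nonneg.mpr hd.le)
    _ = ℓ / a * s ^ d⁻¹ := by
      rw [Real.mul_rpow (by positivity) hs, Real.rpow_rpow_inv (by positivity) hd.ne']
  rw [Real.rpow_neg hM.le, mul_right_comm, ← div_eq_mul_inv, le_div_iff₀ (by positivity)]
  rw [div_mul_eq_mul_div, le_div_iff₀ ha] at h'
  linarith

def RemezOn (g : ℝ → ℝ) (d u v : ℝ) : Prop :=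
  ∀ ω ⊆ Icc u v, MeasurableSet ω → 0 < volume ω →
    (⨆ x ∈ Icc u v, g x) ≤ (4 * (v - u) / (volume ω).toReal) ^ d * ⨆ x ∈ ω, g x

theorem RemezOn.volume_sublevel_le {g : ℝ → ℝ} {d u v M s : ℝ} (hrem : RemezOn g d u v)
    (hd : 0 < d) (hM : 0 < M) (hs : 0 ≤ s) (hg : ContinuousOn g (Icc u v))
    (hMg : M ≤ ⨆ x ∈ Icc u v, g x) :
    volume (Icc u v ∩ g ⁻¹' Iic s) ≤ ENNReal.ofReal (4 * (v - u) * M ^ (-d⁻¹) * s ^ d⁻¹) := by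
  set ω := Icc u v ∩ g ⁻¹' Iic s
  rcases eq_zero_or_pos (volume ω) with h0 | hpos
  · simp [h0]
  have hfin : volume ω ≠ ⊤ :=
    ((measure_mono inter_subset_left).trans_lt measure_Icc_lt_top).ne
  obtain ⟨x, ⟨hux, hxv⟩, -⟩ := nonempty_of_measure_ne_zero hpos.ne'
  have hω : MeasurableSet ω :=
    (hg.preimage_isClosed_of_isClosed isClosed_Icc isClosed_Iic).measurableSet
  have hsup : ⨆ x ∈ ω, g x ≤ s := Real.iSup_le (fun x => Real.iSup_le (fun hx => hx.2) hs) hs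
  rw [← ENNReal.ofReal_toReal hfin]
  refine ENNReal.ofReal_le_ofReal (le_mul_rpow_of_le_div_rpow_mul hd
    (ENNReal.toReal_pos hpos.ne' hfin) (by linarith) hM hs ?_)
  calc M ≤ ⨆ x ∈ Icc u v, g x := hMg
    _ ≤ (4 * (v - u) / (volume ω).toReal) ^ d * ⨆ x ∈ ω, g x :=
      hrem ω inter_subset_left hω hpos
    _ ≤ (4 * (v - u) / (volume ω).toReal) ^ d * s := by
      gcongr
      exact Real.rpow_nonneg (div_nonneg (by linarith) ENNReal.toReal_nonneg) _

theorem RemezOn.setIntegral_rpow_neg_le {g : ℝ → ℝ} {d p u v M : ℝ} {E : Set ℝ}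
    (hrem : RemezOn g d u v) (hd : 0 < d) (hp : 0 < p) (hpd : p * d < 1) (huv : u < v)
    (hM : 0 < M) (hg : ContinuousOn g (Icc u v)) (hMg : M ≤ ⨆ x ∈ Icc u v, g x)
    (hE : MeasurableSet E) (hEJ : E ⊆ Icc u v) (hE₁ : volume E ≤ 1)
    (hgpos : ∀ x ∈ E, 0 < g x) :
    ∫ x in E, g x ^ (-p) ≤ (4 * (v - u)) ^ (p * d) * M ^ (-p) / (1 - p * d) := by
  set C := 4 * (v - u) * M ^ (-d⁻¹)
  have hC : 0 < C := by have := sub_pos.mpr huv; positivity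
  have hdist : ∀ t > 0, volume.restrict E {x | t < g x ^ (-p)} ≤
      ENNReal.ofReal (C * t ^ (-(p * d)⁻¹)) := by
    intro t ht
    rw [Measure.restrict_apply' hE]
    calc volume ({x | t < g x ^ (-p)} ∩ E)
        ≤ volume (Icc u v ∩ g ⁻¹' Iic (t ^ (-p)⁻¹)) := by
          refine measure_mono fun x ⟨hxt, hxE⟩ => ⟨hEJ hxE, ?_⟩
          exact ((Real.lt_rpow_inv_iff_of_neg (hgpos x hxE) ht (neg_neg_of_pos hp)).mpr hxt).le
      _ ≤ ENNReal.ofReal (C * (t ^ (-p)⁻¹) ^ d⁻¹) :=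
          hrem.volume_sublevel_le hd hM (by positivity) hg hMg
      _ = ENNReal.ofReal (C * t ^ (-(p * d)⁻¹)) := by
          rw [← Real.rpow_mul ht.le, inv_neg, mul_inv, neg_mul]
  have hCpow : C ^ (p * d) = (4 * (v - u)) ^ (p * d) * M ^ (-p) := by
    rw [Real.mul_rpow (by linarith) (by positivity), ← Real.rpow_mul hM.le]
    field_simp
  have hnn : 0 ≤ᵐ[volume.restrict E] fun x => g x ^ (-p) :=
    (ae_restrict_iff' hE).mpr (.of_forall fun x hx => (Real.rpow_pos_of_pos (hgpos x hx) _).le)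
  have hmeas : AEMeasurable (fun x => g x ^ (-p)) (volume.restrict E) :=
    ((hg.mono hEJ).aemeasurable hE).pow_const _
  have hlin := lintegral_le_of_meas_lt_le_mul_rpow (by positivity) hpd hC
    ((Measure.restrict_apply_univ E).trans_le hE₁) hnn hmeas hdist
  rw [integral_eq_lintegral_of_nonneg_ae hnn hmeas.aestronglyMeasurable, ← hCpow]
  exact ENNReal.toReal_le_of_le_ofReal (by positivity) hlin

theorem ContinuousOn.le_biSup_Icc {g : ℝ → ℝ} {a b x : ℝ} (hg : ContinuousOn g (Icc a b))
    (hx : x ∈ Icc a b) : g x ≤ ⨆ y ∈ Icc a b, g y := by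
  refine le_ciSup₂ (f := fun y (_ : y ∈ Icc a b) => g y) ?_ x hx
  refine (isCompact_Icc.bddAbove_image hg).mono ?_
  rintro _ ⟨_, ⟨y, rfl⟩, ⟨hy, rfl⟩⟩
  exact ⟨y, hy, rfl⟩

theorem ContinuousOn.biSup_Icc_mono {g : ℝ → ℝ} {a b c : ℝ} (hg : ContinuousOn g (Icc a c))
    (hab : a ≤ b) (hbc : b ≤ c) (hga : 0 ≤ g a) :
    ⨆ x ∈ Icc a b, g x ≤ ⨆ x ∈ Icc a c, g x := by
  have hsup : 0 ≤ ⨆ x ∈ Icc a c, g x := hga.trans (hg.le_biSup_Icc ⟨le_rfl, hab.trans hbc⟩)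
  exact Real.iSup_le (fun x => Real.iSup_le
    (fun hx => hg.le_biSup_Icc ⟨hx.1, hx.2.trans hbc⟩) hsup) hsup

theorem sum_range_succ_mul_geometric_le {r : ℝ} (hr₀ : 0 ≤ r) (hr₁ : r < 1) (n : ℕ) :
    ∑ k ∈ Finset.range n, ((k : ℝ) + 1) * r ^ k ≤ 1 / (1 - r) ^ 2 := by
  have := hasSum_choose_mul_geometric_of_norm_lt_one 1
    (by rwa [Real.norm_of_nonneg hr₀] : ‖r‖ < 1)
  simp only [Nat.choose_one_right, Nat.cast_add, Nat.cast_one] at this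
  exact sum_le_hasSum _ (fun k _ => by positivity) this

theorem sum_range_succ_mul_exp_neg_le (n : ℕ) :
    ∑ k ∈ Finset.range n, ((k : ℝ) + 1) * Real.exp (-k) ≤ Real.exp 1 := by
  have he : 2.7182818283 < Real.exp 1 := Real.exp_one_gt_d9
  have hr : Real.exp (-1) = (Real.exp 1)⁻¹ := Real.exp_neg 1
  calc ∑ k ∈ Finset.range n, ((k : ℝ) + 1) * Real.exp (-k)
      = ∑ k ∈ Finset.range n, ((k : ℝ) + 1) * Real.exp (-1) ^ k := by
        simp only [← Real.exp_nat_mul, mul_neg_one]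
    _ ≤ 1 / (1 - Real.exp (-1)) ^ 2 :=
        sum_range_succ_mul_geometric_le (Real.exp_nonneg _)
          (by rw [hr]; exact inv_lt_one_of_one_lt₀ (by linarith)) n
    _ ≤ Real.exp 1 := by
        have h1 : 1 - (Real.exp 1)⁻¹ = (Real.exp 1 - 1) / Real.exp 1 := by field_simp
        rw [hr, h1, div_pow, one_div_div, div_le_iff₀ (by nlinarith)]
        nlinarith

theorem IntervalIntegrable.integral_eq_sum_range_unit {f : ℝ → ℝ} {n : ℕ}
    (hf : IntervalIntegrable f volume 0 n) :
    ∫ x in (0 : ℝ)..n, f x = ∑ k ∈ Finset.range n, ∫ x in (k : ℝ)..k + 1, f x := by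
  have hsub : ∀ k < n, uIcc (k : ℝ) (k + 1) ⊆ uIcc 0 n := fun k hk => by
    have hkn : (k : ℝ) + 1 ≤ n := by exact_mod_cast hk
    rw [uIcc_of_le (by linarith), uIcc_of_le (by positivity)]
    exact Icc_subset_Icc k.cast_nonneg hkn
  have := intervalIntegral.sum_integral_adjacent_intervals (a := fun k : ℕ => (k : ℝ))
    fun k hk => hf.mono_set (by exact_mod_cast hsub k hk)
  push_cast at this
  exact this.symm

theorem RemezOn.intervalIntegral_rpow_neg_mul_exp_neg_le {g : ℝ → ℝ} {d p a M : ℝ}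
    (hrem : RemezOn g d 0 (a + 1)) (hd : 0 < d) (hp : 0 < p) (hpd : p * d < 1) (ha : 0 ≤ a)
    (hM : 0 < M) (hg : ContinuousOn g (Icc 0 (a + 1))) (hgpos : ∀ x ∈ Icc 0 (a + 1), 0 < g x)
    (hMg : M ≤ ⨆ x ∈ Icc 0 (a + 1), g x) :
    ∫ x in a..a + 1, g x ^ (-p) * Real.exp (-x) ≤
      (a + 1) * Real.exp (-a) * (4 ^ (p * d) * M ^ (-p) / (1 - p * d)) := by
  have hsub : Icc a (a + 1) ⊆ Icc 0 (a + 1) := Icc_subset_Icc_left ha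
  have huIcc : uIcc a (a + 1) = Icc a (a + 1) := uIcc_of_le (by linarith)
  have hcont : ContinuousOn (fun x => g x ^ (-p)) (Icc a (a + 1)) :=
    (hg.mono hsub).rpow_const fun x hx => Or.inl (hgpos x (hsub hx)).ne'
  have hpow : (4 * (a + 1 - 0)) ^ (p * d) ≤ 4 ^ (p * d) * (a + 1) := by
    rw [sub_zero, Real.mul_rpow (by norm_num) (by linarith)]
    gcongr
    exact Real.rpow_le_self_of_one_le (by linarith) hpd.le
  calc ∫ x in a..a + 1, g x ^ (-p) * Real.exp (-x)
      ≤ ∫ x in a..a + 1, g x ^ (-p) * Real.exp (-a) := by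
        refine intervalIntegral.integral_mono_on (by linarith)
          (ContinuousOn.intervalIntegrable ?_) (ContinuousOn.intervalIntegrable ?_) ?_
        · rw [huIcc]; exact hcont.mul (Real.continuous_exp.comp continuous_neg).continuousOn
        · rw [huIcc]; exact hcont.mul continuousOn_const
        · intro x hx
          exact mul_le_mul_of_nonneg_left (Real.exp_le_exp.mpr (neg_le_neg hx.1))
            (Real.rpow_nonneg (hgpos x (hsub hx)).le _)
    _ = (∫ x in Ioc a (a + 1), g x ^ (-p)) * Real.exp (-a) := by
        rw [intervalIntegral.integral_mul_const, intervalIntegral.integral_of_le (by linarith)]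
    _ ≤ (4 * (a + 1 - 0)) ^ (p * d) * M ^ (-p) / (1 - p * d) * Real.exp (-a) := by
        gcongr
        refine hrem.setIntegral_rpow_neg_le hd hp hpd (by linarith) hM hg hMg measurableSet_Ioc
          (Ioc_subset_Icc_self.trans hsub) ?_ fun x hx => hgpos x (hsub (Ioc_subset_Icc_self hx))
        simp
    _ ≤ 4 ^ (p * d) * (a + 1) * M ^ (-p) / (1 - p * d) * Real.exp (-a) := by
        have : 0 < 1 - p * d := by linarith
        gcongr
    _ = (a + 1) * Real.exp (-a) * (4 ^ (p * d) * M ^ (-p) / (1 - p * d)) := by ring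

/-- The estimate of the second factor for integer `s ≥ 1`: if `g > 0` is continuous on
`[0,s]` and satisfies a Remez-type inequality with exponent `d` on every closed
subinterval of `[0,s]`, then for `p > 0` with `p·d < 1`,
`∫_0^s g^{−p} e^{−x} dx ≤ (e · 4^{pd}/(1−pd)) · (sup_{[0,1]} g)^{−p}`. -/
theorem negative_power_estimate (d : ℝ) (hd : 0 < d) (s : ℕ) (hs : 1 ≤ s)
    (p : ℝ) (hp : 0 < p) (hpd : p * d < 1)
    (g : ℝ → ℝ) (hg : ContinuousOn g (Set.Icc 0 (s : ℝ)))
    (hgpos : ∀ x ∈ Set.Icc (0 : ℝ) (s : ℝ), 0 < g x)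
    -- the Remez-type condition on every closed subinterval `J = [u,v] ⊆ [0,s]`
    (hrem : ∀ u v : ℝ, 0 ≤ u → u ≤ v → v ≤ (s : ℝ) →
      ∀ ω : Set ℝ, ω ⊆ Set.Icc u v → MeasurableSet ω → 0 < volume ω →
        (⨆ x ∈ Set.Icc u v, g x) ≤
          (4 * (v - u) / (volume ω).toReal) ^ d * ⨆ x ∈ ω, g x) :
    (∫ x in (0 : ℝ)..(s : ℝ), g x ^ (-p) * Real.exp (-x)) ≤
      Real.exp 1 * (4 : ℝ) ^ (p * d) / (1 - p * d) *
        (⨆ x ∈ Set.Icc (0 : ℝ) 1, g x) ^ (-p) := by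
  set M := ⨆ x ∈ Icc (0 : ℝ) 1, g x
  set K := 4 ^ (p * d) * M ^ (-p) / (1 - p * d)
  have hs₁ : (1 : ℝ) ≤ s := by exact_mod_cast hs
  have hg₀ : 0 < g 0 := hgpos 0 ⟨le_rfl, by positivity⟩
  have hM : 0 < M := hg₀.trans_le ((hg.mono (Icc_subset_Icc_right hs₁)).le_biSup_Icc
    ⟨le_rfl, zero_le_one⟩)
  have hK : 0 ≤ K := div_nonneg (by positivity) (by linarith)
  have hunit : ∀ k < s, ∫ x in (k : ℝ)..k + 1, g x ^ (-p) * Real.exp (-x) ≤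
      (k + 1) * Real.exp (-k) * K := by
    intro k hk
    have hks : (k : ℝ) + 1 ≤ s := by exact_mod_cast hk
    have hJ : Icc 0 ((k : ℝ) + 1) ⊆ Icc 0 s := Icc_subset_Icc_right hks
    exact RemezOn.intervalIntegral_rpow_neg_mul_exp_neg_le (hrem 0 _ le_rfl (by positivity) hks)
      hd hp hpd k.cast_nonneg hM (hg.mono hJ) (fun x hx => hgpos x (hJ hx))
      ((hg.mono hJ).biSup_Icc_mono zero_le_one (by linarith) hg₀.le)
  have hint : IntervalIntegrable (fun x => g x ^ (-p) * Real.exp (-x)) volume 0 s := by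
    refine ContinuousOn.intervalIntegrable ?_
    rw [uIcc_of_le (by positivity)]
    exact (hg.rpow_const fun x hx => Or.inl (hgpos x hx).ne').mul
      (Real.continuous_exp.comp continuous_neg).continuousOn
  calc ∫ x in (0 : ℝ)..s, g x ^ (-p) * Real.exp (-x)
      = ∑ k ∈ Finset.range s, ∫ x in (k : ℝ)..k + 1, g x ^ (-p) * Real.exp (-x) :=
        hint.integral_eq_sum_range_unit
    _ ≤ ∑ k ∈ Finset.range s, ((k : ℝ) + 1) * Real.exp (-k) * K :=
        Finset.sum_le_sum fun k hk => hunit k (Finset.mem_range.mp hk)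
    _ ≤ Real.exp 1 * K := by
        rw [← Finset.sum_mul]
        gcongr
        exact sum_range_succ_mul_exp_neg_le s
    _ = Real.exp 1 * 4 ^ (p * d) / (1 - p * d) * M ^ (-p) := by ring
end
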